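/- Define s(x) = 1 + |x| − x₁ for x ∈ ℝ³. Then there exists C > 0 such that for all x ∈ ℝ³: ∫_{ℝ³} [(1+|x−y|) s(x−y)]^{−2} [(1+|y|) s(y)]^{−2} dy ≤ C [(1+|x|) s(x)]^{−2} ln(2+|x|). -/

import Mathlib

open MeasureTheory

noncomputable def sOne (x : EuclideanSpace ℝ (Fin 3)) : ℝ := 1 + ‖x‖ - x 0

/-!
Write `W(x) = (1 + |x|) s(x)`. Two properties of `W` drive the estimate: it is
quasi-subadditive, `W(a + b) ≤ K (W a + W b)`, so for every `y` one of `W(y)`, `W(x - y)`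
is `≳ W(x)`; and its sublevel sets have volume `|{W ≤ R}| ≲ R²`. Both are read off the
polynomial model `V(x) = 1 + |x₁| + x₂² + x₃² + (x₁⁻)²`, which is comparable to `W` and
whose sublevel sets lie in boxes `R × √R × √R`.

By the first property, `W(x - y)⁻² W(y)⁻² ≤ g(W y) + g(W (x - y))` with
`g(t) = t⁻² min(A, t⁻²)` and `A ≍ W(x)⁻²`. Translation invariance reduces the integral to
`2 ∫ g(W y) dy`, and summing `g` over the dyadic shells `{2ʲ ≤ W ≤ 2ʲ⁺¹}`, of volume
`≲ 4ʲ`, gives `∑ⱼ min(A, 4⁻ʲ) ≲ A (1 + log₂ W(x))`, with `log₂ W(x) ≲ log(2 + |x|)`.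
-/

open Set
open scoped ENNReal

theorem inv_sq_mul_inv_sq_le_add {a b A : ℝ} (ha : 0 < a) (hb : 0 < b)
    (hA : (max a b ^ 2)⁻¹ ≤ A) :
    (a ^ 2)⁻¹ * (b ^ 2)⁻¹ ≤
      (a ^ 2)⁻¹ * min A (a ^ 2)⁻¹ + (b ^ 2)⁻¹ * min A (b ^ 2)⁻¹ := by
  have key : ∀ {a b : ℝ}, 0 < a → a ≤ b → (b ^ 2)⁻¹ ≤ A →
      (a ^ 2)⁻¹ * (b ^ 2)⁻¹ ≤ (a ^ 2)⁻¹ * min A (a ^ 2)⁻¹ := fun ha hab hbA => by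
    gcongr
    exact le_min hbA (by gcongr)
  have hA0 : 0 ≤ A := le_trans (by positivity) hA
  have hnonneg : ∀ t : ℝ, 0 ≤ (t ^ 2)⁻¹ * min A (t ^ 2)⁻¹ := fun t =>
    mul_nonneg (by positivity) (le_min hA0 (by positivity))
  rcases le_total a b with h | h
  · rw [max_eq_right h] at hA
    exact (key ha h hA).trans (le_add_of_nonneg_right (hnonneg b))
  · rw [max_eq_left h] at hA
    rw [mul_comm]
    exact (key hb h hA).trans (le_add_of_nonneg_left (hnonneg a))

theorem tsum_ofReal_min_inv_four_pow_le {A : ℝ} {N : ℕ} (hN : ((4 : ℝ) ^ N)⁻¹ ≤ A) :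
    ∑' j : ℕ, ENNReal.ofReal (min A ((4 : ℝ) ^ j)⁻¹) ≤ ENNReal.ofReal ((N + 2) * A) := by
  have hA : 0 ≤ A := le_trans (by positivity) hN
  have hhead : ∑ j ∈ Finset.range N, ENNReal.ofReal (min A ((4 : ℝ) ^ j)⁻¹) ≤
      ENNReal.ofReal (N * A) :=
    calc ∑ j ∈ Finset.range N, ENNReal.ofReal (min A ((4 : ℝ) ^ j)⁻¹)
        ≤ ∑ _j ∈ Finset.range N, ENNReal.ofReal A :=
          Finset.sum_le_sum fun j _ => ENNReal.ofReal_le_ofReal (min_le_left _ _)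
      _ = ENNReal.ofReal (N * A) := by
          rw [Finset.sum_const, Finset.card_range, nsmul_eq_mul,
            ENNReal.ofReal_mul (Nat.cast_nonneg _), ENNReal.ofReal_natCast]
  have htail : ∑' j : ℕ, ENNReal.ofReal (min A ((4 : ℝ) ^ (j + N))⁻¹) ≤
      ENNReal.ofReal (2 * A) := by
    have hgeom : ∑' j : ℕ, ((4 : ℝ) ^ N)⁻¹ * 4⁻¹ ^ j = 4 / 3 * ((4 : ℝ) ^ N)⁻¹ := by
      rw [tsum_mul_left, tsum_geometric_of_lt_one (by norm_num) (by norm_num)]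
      ring
    calc ∑' j : ℕ, ENNReal.ofReal (min A ((4 : ℝ) ^ (j + N))⁻¹)
        ≤ ∑' j : ℕ, ENNReal.ofReal (((4 : ℝ) ^ N)⁻¹ * 4⁻¹ ^ j) :=
          ENNReal.tsum_le_tsum fun j => ENNReal.ofReal_le_ofReal <|
            (min_le_right _ _).trans_eq (by rw [pow_add, mul_inv, inv_pow, mul_comm])
      _ = ENNReal.ofReal (4 / 3 * ((4 : ℝ) ^ N)⁻¹) := by
          rw [← hgeom, ENNReal.ofReal_tsum_of_nonneg (fun j => by positivity)]
          exact (summable_geometric_of_lt_one (by norm_num) (by norm_num)).mul_left _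
      _ ≤ ENNReal.ofReal (2 * A) :=
          ENNReal.ofReal_le_ofReal <| by
            linarith [inv_nonneg.2 (by positivity : (0 : ℝ) ≤ 4 ^ N)]
  calc ∑' j : ℕ, ENNReal.ofReal (min A ((4 : ℝ) ^ j)⁻¹)
      = ∑ j ∈ Finset.range N, ENNReal.ofReal (min A ((4 : ℝ) ^ j)⁻¹)
        + ∑' j : ℕ, ENNReal.ofReal (min A ((4 : ℝ) ^ (j + N))⁻¹) :=
        (ENNReal.summable.sum_add_tsum_nat_add' ..).symm
    _ ≤ ENNReal.ofReal (N * A) + ENNReal.ofReal (2 * A) := add_le_add hhead htail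
    _ = ENNReal.ofReal ((N + 2) * A) := by
        rw [← ENNReal.ofReal_add (by positivity) (by positivity)]
        ring_nf

section DyadicShells

variable {α : Type*} [MeasurableSpace α] {μ : Measure α} {v : α → ℝ}

theorem lintegral_comp_le_tsum_dyadic (hv : ∀ a, 1 ≤ v a) {F : ℝ → ℝ≥0∞}
    (hF : AntitoneOn F (Ici 1)) :
    ∫⁻ a, F (v a) ∂μ ≤ ∑' j : ℕ, F (2 ^ j) * μ {a | v a ≤ 2 ^ (j + 1)} := by
  set shell : ℕ → Set α := fun j => {a | 2 ^ j ≤ v a ∧ v a ≤ 2 ^ (j + 1)}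
  have hcover : ⋃ j, shell j = univ := by
    refine eq_univ_of_forall fun a => mem_iUnion.2 ?_
    obtain ⟨j, hj⟩ := exists_nat_pow_near (hv a) one_lt_two
    exact ⟨j, hj.1, hj.2.le⟩
  calc ∫⁻ a, F (v a) ∂μ = ∫⁻ a in ⋃ j, shell j, F (v a) ∂μ := by
        rw [hcover, setLIntegral_univ]
    _ ≤ ∑' j, ∫⁻ a in shell j, F (v a) ∂μ := lintegral_iUnion_le _ _
    _ ≤ ∑' j, ∫⁻ _ in shell j, F (2 ^ j) ∂μ := ENNReal.tsum_le_tsum fun j =>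
        setLIntegral_mono measurable_const fun a ha =>
          hF (one_le_pow₀ one_le_two : (1 : ℝ) ≤ 2 ^ j) (hv a) ha.1
    _ ≤ ∑' j : ℕ, F (2 ^ j) * μ {a | v a ≤ 2 ^ (j + 1)} :=
        ENNReal.tsum_le_tsum fun j => by
        rw [setLIntegral_const]
        gcongr
        exact fun a ha => ha.2

theorem lintegral_inv_sq_mul_min_le {M A : ℝ} (hv : ∀ a, 1 ≤ v a)
    (hM : ∀ R, 1 ≤ R → μ {a | v a ≤ R} ≤ ENNReal.ofReal (M * R ^ 2)) {N : ℕ}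
    (hN : ((4 : ℝ) ^ N)⁻¹ ≤ A) :
    ∫⁻ a, ENNReal.ofReal ((v a ^ 2)⁻¹ * min A (v a ^ 2)⁻¹) ∂μ ≤
      ENNReal.ofReal (4 * M * ((N + 2) * A)) := by
  have hA : 0 ≤ A := le_trans (by positivity) hN
  have h4 : ∀ j : ℕ, ((2 : ℝ) ^ j) ^ 2 = 4 ^ j := fun j => by
    rw [← pow_mul, mul_comm, pow_mul]; norm_num
  have hanti :
      AntitoneOn (fun t : ℝ => ENNReal.ofReal ((t ^ 2)⁻¹ * min A (t ^ 2)⁻¹)) (Ici 1) :=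
    fun s hs _ _ hst => by
      have : (0 : ℝ) < s := one_pos.trans_le hs
      exact ENNReal.ofReal_le_ofReal (by gcongr)
  calc ∫⁻ a, ENNReal.ofReal ((v a ^ 2)⁻¹ * min A (v a ^ 2)⁻¹) ∂μ
      ≤ ∑' j : ℕ, ENNReal.ofReal ((((2 : ℝ) ^ j) ^ 2)⁻¹ * min A (((2 : ℝ) ^ j) ^ 2)⁻¹) *
          μ {a | v a ≤ 2 ^ (j + 1)} := lintegral_comp_le_tsum_dyadic hv hanti
    _ ≤ ∑' j : ℕ, ENNReal.ofReal (4 * M) * ENNReal.ofReal (min A ((4 : ℝ) ^ j)⁻¹) :=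
        ENNReal.tsum_le_tsum fun j => by
          have hmin : 0 ≤ min A ((4 : ℝ) ^ j)⁻¹ := le_min hA (by positivity)
          grw [hM _ (one_le_pow₀ one_le_two)]
          rw [h4, h4, pow_succ, ← ENNReal.ofReal_mul (mul_nonneg (by positivity) hmin),
            ← ENNReal.ofReal_mul' hmin]
          exact ENNReal.ofReal_le_ofReal (by field_simp; rfl)
    _ = ENNReal.ofReal (4 * M) * ∑' j : ℕ, ENNReal.ofReal (min A ((4 : ℝ) ^ j)⁻¹) :=
        ENNReal.tsum_mul_left
    _ ≤ ENNReal.ofReal (4 * M) * ENNReal.ofReal ((N + 2) * A) := by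
        gcongr
        exact tsum_ofReal_min_inv_four_pow_le hN
    _ = ENNReal.ofReal (4 * M * ((N + 2) * A)) :=
        (ENNReal.ofReal_mul' (mul_nonneg (by positivity) hA)).symm

end DyadicShells

section Convolution

variable {G : Type*} [MeasurableSpace G] [AddGroup G] [MeasurableAdd G] [MeasurableNeg G]
  {μ : Measure G} [μ.IsAddLeftInvariant] [μ.IsNegInvariant]

theorem lintegral_inv_sq_mul_inv_sq_sub_le {v : G → ℝ} {K M : ℝ} (hvm : Measurable v)
    (hv : ∀ a, 1 ≤ v a) (hK : ∀ a b, v (a + b) ≤ K * (v a + v b))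
    (hM : ∀ R, 1 ≤ R → μ {a | v a ≤ R} ≤ ENNReal.ofReal (M * R ^ 2)) (x : G) {N : ℕ}
    (hN : v x ≤ 2 ^ N) :
    ∫⁻ y, ENNReal.ofReal ((v (x - y) ^ 2)⁻¹ * (v y ^ 2)⁻¹) ∂μ ≤
      ENNReal.ofReal (32 * K ^ 2 * M * (N + 2) * (v x ^ 2)⁻¹) := by
  have hv0 : ∀ a, 0 < v a := fun a => one_pos.trans_le (hv a)
  have hK1 : 1 ≤ 2 * K := by
    have := hK 0 0
    rw [add_zero] at this
    nlinarith [hv0 0]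
  have hmax : ∀ y, v x / (2 * K) ≤ max (v (x - y)) (v y) := fun y => by
    have := hK (x - y) y
    rw [sub_add_cancel] at this
    rw [div_le_iff₀ (by positivity)]
    nlinarith [le_max_left (v (x - y)) (v y), le_max_right (v (x - y)) (v y)]
  set A : ℝ := 4 * K ^ 2 * (v x ^ 2)⁻¹
  have hA : ∀ y, (max (v (x - y)) (v y) ^ 2)⁻¹ ≤ A := fun y => by
    have : 0 < v x / (2 * K) := div_pos (hv0 x) (by positivity)
    calc (max (v (x - y)) (v y) ^ 2)⁻¹ ≤ ((v x / (2 * K)) ^ 2)⁻¹ := by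
          gcongr
          exact hmax y
      _ = A := by rw [div_pow, inv_div]; ring
  have hNA : ((4 : ℝ) ^ N)⁻¹ ≤ A :=
    calc ((4 : ℝ) ^ N)⁻¹ = (((2 : ℝ) ^ N) ^ 2)⁻¹ := by
          rw [← pow_mul, mul_comm, pow_mul]; norm_num
      _ ≤ (v x ^ 2)⁻¹ := by have := hv0 x; gcongr
      _ ≤ A := le_mul_of_one_le_left (by positivity) (by nlinarith)
  set F : G → ℝ≥0∞ := fun y => ENNReal.ofReal ((v y ^ 2)⁻¹ * min A (v y ^ 2)⁻¹)
  have hF : Measurable F := by fun_prop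
  calc ∫⁻ y, ENNReal.ofReal ((v (x - y) ^ 2)⁻¹ * (v y ^ 2)⁻¹) ∂μ
      ≤ ∫⁻ y, F (x - y) + F y ∂μ := lintegral_mono fun y => by
        rw [← ENNReal.ofReal_add (by positivity) (by positivity)]
        exact ENNReal.ofReal_le_ofReal (inv_sq_mul_inv_sq_le_add (hv0 _) (hv0 _) (hA y))
    _ = ∫⁻ y, F (x - y) ∂μ + ∫⁻ y, F y ∂μ := lintegral_add_right _ hF
    _ = 2 * ∫⁻ y, F y ∂μ := by rw [lintegral_sub_left_eq_self F x, two_mul]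
    _ ≤ 2 * ENNReal.ofReal (4 * M * ((N + 2) * A)) := by
        gcongr
        exact lintegral_inv_sq_mul_min_le hv hM hNA
    _ = ENNReal.ofReal (32 * K ^ 2 * M * (N + 2) * (v x ^ 2)⁻¹) := by
        rw [← ENNReal.ofReal_ofNat 2, ← ENNReal.ofReal_mul (by norm_num)]
        congr 1
        ring

end Convolution

theorem integral_le_of_lintegral_ofReal_le {α : Type*} [MeasurableSpace α] {μ : Measure α}
    {f : α → ℝ} {c : ℝ} (hf : 0 ≤ f) (hc : 0 ≤ c)
    (h : ∫⁻ a, ENNReal.ofReal (f a) ∂μ ≤ ENNReal.ofReal c) :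
    ∫ a, f a ∂μ ≤ c := by
  refine (le_abs_self _).trans <| (norm_integral_le_lintegral_norm f).trans ?_
  simp only [Real.norm_eq_abs, abs_of_nonneg (hf _)]
  exact ENNReal.toReal_le_of_le_ofReal hc h

local notation "ℝ³" => EuclideanSpace ℝ (Fin 3)

noncomputable def oseenWeight (x : ℝ³) : ℝ := (1 + ‖x‖) * sOne x

/-- The coordinate `x 0` is the paper's `x₁`. In the wake `x₁ > 0` one has
`|x| - x₁ ≈ |x'|² / (2 x₁)`, so `oseenWeight x ≈ x₁ + |x'|² / 2`, while for `x₁ < 0` it is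
`≈ |x|²`; this polynomial reproduces both regimes. -/
noncomputable def wakeModel (x : ℝ³) : ℝ := 1 + |x 0| + x 1 ^ 2 + x 2 ^ 2 + max (-x 0) 0 ^ 2

theorem norm_sq_eq_fin_three (x : ℝ³) : ‖x‖ ^ 2 = x 0 ^ 2 + x 1 ^ 2 + x 2 ^ 2 := by
  rw [EuclideanSpace.real_norm_sq_eq, Fin.sum_univ_three]

theorem abs_apply_le_norm (x : ℝ³) (i : Fin 3) : |x i| ≤ ‖x‖ := by
  simpa using PiLp.norm_apply_le x i

theorem one_le_sOne (x : ℝ³) : 1 ≤ sOne x := by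
  have := abs_apply_le_norm x 0
  unfold sOne
  linarith [le_abs_self (x 0)]

theorem one_le_oseenWeight (x : ℝ³) : 1 ≤ oseenWeight x :=
  one_le_mul_of_one_le_of_one_le (le_add_of_nonneg_right (norm_nonneg x)) (one_le_sOne x)

theorem oseenWeight_le (x : ℝ³) : oseenWeight x ≤ 2 * (1 + ‖x‖) ^ 2 := by
  have hs : sOne x ≤ 2 * (1 + ‖x‖) := by
    have := abs_apply_le_norm x 0
    unfold sOne
    linarith [neg_abs_le (x 0)]
  unfold oseenWeight
  nlinarith [norm_nonneg x]

theorem measurable_oseenWeight : Measurable oseenWeight := by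
  unfold oseenWeight sOne
  fun_prop

theorem wakeModel_le_three_mul_oseenWeight (x : ℝ³) : wakeModel x ≤ 3 * oseenWeight x := by
  have hnorm := norm_sq_eq_fin_three x
  have hx0 := abs_apply_le_norm x 0
  have hr : 0 ≤ ‖x‖ := norm_nonneg x
  unfold wakeModel oseenWeight sOne
  rcases le_total 0 (x 0) with h | h
  · rw [max_eq_right (by linarith), abs_of_nonneg h]
    nlinarith [sq_nonneg (‖x‖ - x 0)]
  · rw [max_eq_left (by linarith), abs_of_nonpos h]
    nlinarith [sq_nonneg (‖x‖ + x 0)]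

theorem oseenWeight_le_eighteen_mul_wakeModel (x : ℝ³) :
    oseenWeight x ≤ 18 * wakeModel x := by
  have hnorm := norm_sq_eq_fin_three x
  have hx0 := abs_apply_le_norm x 0
  have hr : 0 ≤ ‖x‖ := norm_nonneg x
  unfold wakeModel oseenWeight sOne
  rcases le_total 0 (x 0) with h | h
  · rw [max_eq_right (by linarith), abs_of_nonneg h]
    have hx : x 0 ≤ ‖x‖ := (le_abs_self _).trans hx0
    nlinarith [sq_nonneg (‖x‖ - x 0 - 1), mul_nonneg (sub_nonneg.2 hx) h]
  · rw [max_eq_left (by linarith), abs_of_nonpos h]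
    nlinarith [sq_nonneg (‖x‖ - 1), sq_nonneg (‖x‖ + x 0)]

theorem wakeModel_add_le (a b : ℝ³) : wakeModel (a + b) ≤ 2 * (wakeModel a + wakeModel b) := by
  have habs : |a 0 + b 0| ≤ |a 0| + |b 0| := abs_add_le _ _
  have hneg : max (-(a 0 + b 0)) 0 ≤ max (-a 0) 0 + max (-b 0) 0 :=
    max_le (by linarith [le_max_left (-a 0) 0, le_max_left (-b 0) 0]) (by positivity)
  have hsq : max (-(a 0 + b 0)) 0 ^ 2 ≤ 2 * (max (-a 0) 0 ^ 2 + max (-b 0) 0 ^ 2) := by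
    nlinarith [sq_nonneg (max (-a 0) 0 - max (-b 0) 0), le_max_right (-(a 0 + b 0)) 0]
  simp only [wakeModel, PiLp.add_apply]
  nlinarith [sq_nonneg (a 1 - b 1), sq_nonneg (a 2 - b 2), abs_nonneg (a 0), abs_nonneg (b 0)]

theorem oseenWeight_add_le (a b : ℝ³) :
    oseenWeight (a + b) ≤ 108 * (oseenWeight a + oseenWeight b) := by
  linarith [oseenWeight_le_eighteen_mul_wakeModel (a + b), wakeModel_add_le a b,
    wakeModel_le_three_mul_oseenWeight a, wakeModel_le_three_mul_oseenWeight b]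

theorem volume_wakeModel_le {R : ℝ} (hR : 0 ≤ R) :
    volume {x : ℝ³ | wakeModel x ≤ R} ≤ ENNReal.ofReal (8 * R ^ 2) := by
  set b : Fin 3 → ℝ := ![R, √R, √R]
  set box : Set (Fin 3 → ℝ) := univ.pi fun i => Icc (-b i) (b i)
  have hsub : {x : ℝ³ | wakeModel x ≤ R} ⊆
      (MeasurableEquiv.toLp 2 (Fin 3 → ℝ)).symm ⁻¹' box := by
    intro x hx
    simp only [mem_ofPred_eq, wakeModel] at hx
    have hneg := sq_nonneg (max (-x 0) 0)
    have h0 : |x 0| ≤ R := by nlinarith [sq_nonneg (x 1), sq_nonneg (x 2)]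
    have h1 : |x 1| ≤ √R := Real.abs_le_sqrt (by nlinarith [abs_nonneg (x 0), sq_nonneg (x 2)])
    have h2 : |x 2| ≤ √R := Real.abs_le_sqrt (by nlinarith [abs_nonneg (x 0), sq_nonneg (x 1)])
    intro i _
    fin_cases i
    exacts [abs_le.mp h0, abs_le.mp h1, abs_le.mp h2]
  calc volume {x : ℝ³ | wakeModel x ≤ R}
      ≤ volume ((MeasurableEquiv.toLp 2 (Fin 3 → ℝ)).symm ⁻¹' box) := measure_mono hsub
    _ = volume box :=
        (EuclideanSpace.volume_preserving_symm_measurableEquiv_toLp (Fin 3)).measure_preimage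
          (MeasurableSet.univ_pi fun _ => measurableSet_Icc).nullMeasurableSet
    _ = ENNReal.ofReal (8 * R ^ 2) := by
        rw [volume_pi_pi, Fin.prod_univ_three]
        simp only [Real.volume_Icc, b, Matrix.cons_val]
        rw [← ENNReal.ofReal_mul (by linarith),
          ← ENNReal.ofReal_mul (by nlinarith [Real.sqrt_nonneg R])]
        congr 1
        nlinarith [Real.mul_self_sqrt hR]

theorem volume_oseenWeight_le {R : ℝ} (hR : 0 ≤ R) :
    volume {x : ℝ³ | oseenWeight x ≤ R} ≤ ENNReal.ofReal (72 * R ^ 2) :=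
  calc volume {x : ℝ³ | oseenWeight x ≤ R}
      ≤ volume {x : ℝ³ | wakeModel x ≤ 3 * R} := measure_mono fun x hx =>
        (wakeModel_le_three_mul_oseenWeight x).trans <| by
          simp only [mem_ofPred_eq] at hx
          linarith
    _ ≤ ENNReal.ofReal (8 * (3 * R) ^ 2) := volume_wakeModel_le (by positivity)
    _ = ENNReal.ofReal (72 * R ^ 2) := by ring_nf

theorem exists_oseenWeight_le_two_pow (x : ℝ³) :
    ∃ N : ℕ, oseenWeight x ≤ 2 ^ N ∧ (N + 2 : ℝ) ≤ 11 * Real.log (2 + ‖x‖) := by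
  have hx := norm_nonneg x
  obtain ⟨n, hn, hn'⟩ := exists_nat_pow_near (show (1 : ℝ) ≤ 2 + ‖x‖ by linarith) one_lt_two
  refine ⟨2 * n + 3, ?_, ?_⟩
  · calc oseenWeight x ≤ 2 * (1 + ‖x‖) ^ 2 := oseenWeight_le x
      _ ≤ 2 * (2 ^ (n + 1)) ^ 2 := by gcongr; linarith
      _ = 2 ^ (2 * n + 3) := by ring
  · have hlog2 := Real.log_two_gt_d9
    have hL2 : Real.log 2 ≤ Real.log (2 + ‖x‖) := Real.log_le_log (by norm_num) (by linarith)
    have hnL : n * Real.log 2 ≤ Real.log (2 + ‖x‖) := by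
      rw [← Real.log_pow]
      exact Real.log_le_log (by positivity) hn
    push_cast
    nlinarith

theorem convolution_inequality :
    ∃ C : ℝ, 0 < C ∧ ∀ x : EuclideanSpace ℝ (Fin 3),
      (∫ y : EuclideanSpace ℝ (Fin 3),
          ((1 + ‖x - y‖) * sOne (x - y)) ^ (-(2:ℝ)) * ((1 + ‖y‖) * sOne y) ^ (-(2:ℝ)))
        ≤ C * ((1 + ‖x‖) * sOne x) ^ (-(2:ℝ)) * Real.log (2 + ‖x‖) := by
  refine ⟨32 * 108 ^ 2 * 72 * 11, by norm_num, fun x => ?_⟩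
  have hW : ∀ z, ((1 + ‖z‖) * sOne z) ^ (-(2:ℝ)) = (oseenWeight z ^ 2)⁻¹ := fun z => by
    simp [oseenWeight, Real.rpow_neg_ofNat]
  simp only [hW]
  obtain ⟨N, hWN, hNlog⟩ := exists_oseenWeight_le_two_pow x
  have hconv := lintegral_inv_sq_mul_inv_sq_sub_le measurable_oseenWeight one_le_oseenWeight
    oseenWeight_add_le (fun R hR => volume_oseenWeight_le (zero_le_one.trans hR)) x hWN
  have hWx : 0 < (oseenWeight x ^ 2)⁻¹ := by
    have := one_le_oseenWeight x
    positivity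
  calc ∫ y, (oseenWeight (x - y) ^ 2)⁻¹ * (oseenWeight y ^ 2)⁻¹
      ≤ 32 * 108 ^ 2 * 72 * (N + 2) * (oseenWeight x ^ 2)⁻¹ :=
        integral_le_of_lintegral_ofReal_le (fun y => by positivity) (by positivity) hconv
    _ ≤ 32 * 108 ^ 2 * 72 * 11 * (oseenWeight x ^ 2)⁻¹ * Real.log (2 + ‖x‖) := by
        nlinarith
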